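/- Let p > q ≥ 1 be coprime integers and let (b_1,…,b_k), b_i ≥ 2, be the tuple with [b_1,…,b_k] = p/(p−q). Suppose k ≥ 4, b_i ≥ 3 for every i with 2 ≤ i ≤ k−2, and b_k ≥ k−2. Then for all integers r, s ≥ 0 with r + s + 4 = k, the k-tuple n(r,s) = (1, 2,…,2, 3, 2,…,2, 1, s+2) — consisting of a 1, followed by r twos, a 3, s twos, a 1, and final entry s+2 — belongs to Z_{p,q}. -/

import Mathlib

/-- Hirzebruch–Jung continued fraction `[n₁,…,n_k] = n₁ - 1/[n₂,…,n_k]`. -/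
def hjcf : List ℤ → ℚ
  | [] => 0
  | [n] => (n : ℚ)
  | n :: m :: l => (n : ℚ) - (hjcf (m :: l))⁻¹

/-- A tuple is admissible if every proper tail value used as a denominator is nonzero. -/
def HJAdmissible : List ℤ → Prop
  | [] => True
  | [_] => True
  | _ :: m :: l => hjcf (m :: l) ≠ 0 ∧ HJAdmissible (m :: l)

/-- `Blowup n n'` : `n'` is obtained from `n` by a single blowup, i.e. `n` is obtained
from `n'` by a blowdown at an entry equal to `1`. -/
inductive Blowup : List ℤ → List ℤ → Prop
  | head (x : ℤ) (l : List ℤ) : Blowup (x :: l) (1 :: (x + 1) :: l)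
  | last (l : List ℤ) (x : ℤ) : Blowup (l ++ [x]) (l ++ [x + 1, 1])
  | mid (a : List ℤ) (x y : ℤ) (b : List ℤ) :
      Blowup (a ++ x :: y :: b) (a ++ (x + 1) :: 1 :: (y + 1) :: b)

/-- The set `Z_{p,q}` attached to the tuple `b = (b₁,…,b_k)`: admissible integer tuples
`(n₁,…,n_k)` with `[n₁,…,n_k] = 0` and `0 ≤ nᵢ ≤ bᵢ` for all `i`. -/
def Zset (b : List ℤ) : Set (List ℤ) :=
  {n | HJAdmissible n ∧ hjcf n = 0 ∧ List.Forall₂ (fun x y => 0 ≤ x ∧ x ≤ y) n b}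


/-!
Reading the continued fraction from the right: `[1, s+2] = 1 - 1/(s+2)`, and prepending a `2`
sends `1 - 1/m` to `1 - 1/(m-1)`, so after the `s` twos the value is `1/2`. Then `3 - 2 = 1`,
which is a fixed point of `x ↦ 2 - 1/x`, and the leading `1` gives `1 - 1 = 0`. No tail value
met along the way is zero. The bounds `nᵢ ≤ bᵢ` hold because `bᵢ ≥ 2` everywhere, the `3`
sits at a middle position, and the last entry `s + 2 = k - 2` is at most `b_k`.
-/

open List

lemma hjcf_cons {l : List ℤ} (hl : l ≠ []) (x : ℤ) : hjcf (x :: l) = x - (hjcf l)⁻¹ := by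
  cases l with
  | nil => exact absurd rfl hl
  | cons _ _ => rfl

lemma hjAdmissible_cons_iff {l : List ℤ} (hl : l ≠ []) (x : ℤ) :
    HJAdmissible (x :: l) ↔ hjcf l ≠ 0 ∧ HJAdmissible l := by
  cases l with
  | nil => exact absurd rfl hl
  | cons _ _ => rfl

lemma hjAdmissible_cons_of_hjcf_eq {l : List ℤ} (hl : l ≠ []) (ha : HJAdmissible l) {v : ℚ}
    (hv : hjcf l = v) (h0 : v ≠ 0) (x : ℤ) :
    HJAdmissible (x :: l) ∧ hjcf (x :: l) = x - v⁻¹ :=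
  ⟨(hjAdmissible_cons_iff hl x).2 ⟨hv ▸ h0, ha⟩, by rw [hjcf_cons hl, hv]⟩

lemma replicate_two_append_ne_nil {l : List ℤ} (hl : l ≠ []) (j : ℕ) :
    replicate j 2 ++ l ≠ [] := by
  simp [hl]

lemma two_sub_inv_one_sub_inv {m : ℚ} (h0 : m ≠ 0) (h1 : m - 1 ≠ 0) :
    2 - (1 - m⁻¹)⁻¹ = 1 - (m - 1)⁻¹ := by
  field_simp
  ring

lemma hjcf_replicate_two_append {l : List ℤ} (hl : l ≠ []) (ha : HJAdmissible l) {c : ℕ}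
    (hc : hjcf l = 1 - (c : ℚ)⁻¹) {j : ℕ} (hj : j < c) :
    HJAdmissible (replicate j 2 ++ l) ∧ hjcf (replicate j 2 ++ l) = 1 - ((c : ℚ) - j)⁻¹ := by
  induction j with
  | zero => simpa using And.intro ha hc
  | succ j ih =>
    obtain ⟨ha', hv⟩ := ih (by omega)
    have hcj : (j : ℚ) + 1 < c := by exact_mod_cast hj
    have hm0 : (c : ℚ) - j ≠ 0 := by linarith
    have hm1 : (c : ℚ) - j - 1 ≠ 0 := by linarith
    have hv0 : 1 - ((c : ℚ) - j)⁻¹ ≠ 0 := by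
      rw [sub_ne_zero, ne_comm, inv_ne_one]; exact sub_ne_zero.1 hm1
    obtain ⟨ha'', hv'⟩ :=
      hjAdmissible_cons_of_hjcf_eq (replicate_two_append_ne_nil hl j) ha' hv hv0 2
    refine ⟨ha'', hv'.trans ?_⟩
    push_cast
    rw [two_sub_inv_one_sub_inv hm0 hm1, sub_add_eq_sub_sub]

lemma hjcf_replicate_two_append_of_hjcf_eq_one {l : List ℤ} (hl : l ≠ [])
    (ha : HJAdmissible l) (h1 : hjcf l = 1) (j : ℕ) :
    HJAdmissible (replicate j 2 ++ l) ∧ hjcf (replicate j 2 ++ l) = 1 := by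
  induction j with
  | zero => exact ⟨ha, h1⟩
  | succ j ih =>
    obtain ⟨ha', hv⟩ := ih
    obtain ⟨ha'', hv'⟩ :=
      hjAdmissible_cons_of_hjcf_eq (replicate_two_append_ne_nil hl j) ha' hv one_ne_zero 2
    exact ⟨ha'', hv'.trans (by norm_num)⟩

def nTuple (r s : ℕ) : List ℤ :=
  1 :: (replicate r 2 ++ 3 :: (replicate s 2 ++ [1, (s : ℤ) + 2]))

lemma hjcf_nTuple (r s : ℕ) : HJAdmissible (nTuple r s) ∧ hjcf (nTuple r s) = 0 := by
  have htail :
      HJAdmissible [1, (s : ℤ) + 2] ∧ hjcf [1, (s : ℤ) + 2] = 1 - ((s + 2 : ℕ) : ℚ)⁻¹ :=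
    ⟨⟨show (((s : ℤ) + 2 : ℤ) : ℚ) ≠ 0 by positivity, trivial⟩,
      show ((1 : ℤ) : ℚ) - (((s : ℤ) + 2 : ℤ) : ℚ)⁻¹ = _ by push_cast; rfl⟩
  obtain ⟨ha₂, hv₂⟩ :=
    hjcf_replicate_two_append (by simp) htail.1 htail.2 (j := s) (by omega)
  rw [show ((s + 2 : ℕ) : ℚ) - s = 2 by push_cast; ring] at hv₂
  obtain ⟨ha₃, hv₃⟩ := hjAdmissible_cons_of_hjcf_eq (by simp) ha₂ hv₂ (by norm_num) 3
  obtain ⟨ha₄, hv₄⟩ :=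
    hjcf_replicate_two_append_of_hjcf_eq_one (by simp) ha₃ (hv₃.trans (by norm_num)) r
  obtain ⟨ha₅, hv₅⟩ := hjAdmissible_cons_of_hjcf_eq (by simp) ha₄ hv₄ one_ne_zero 1
  exact ⟨ha₅, hv₅.trans (by norm_num)⟩

lemma length_nTuple (r s : ℕ) : (nTuple r s).length = r + s + 4 := by
  simp [nTuple]; omega

lemma getElem_nTuple {r s i : ℕ} (hi : i < (nTuple r s).length) :
    (nTuple r s)[i] =
      if i = r + 1 then 3 else if i = r + s + 3 then (s : ℤ) + 2
      else if i = 0 ∨ i = r + s + 2 then 1 else 2 := by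
  rw [length_nTuple] at hi
  simp only [nTuple, getElem_cons, getElem_append, getElem_replicate, length_replicate]
  split_ifs <;> first | rfl | omega

lemma nTuple_forall₂ {r s : ℕ} {b : List ℤ} (hlen : b.length = r + s + 4)
    (hb2 : ∀ x ∈ b, 2 ≤ x) (hmid : 3 ≤ b[r + 1]) (hlast : (s : ℤ) + 2 ≤ b[r + s + 3]) :
    Forall₂ (fun x y => 0 ≤ x ∧ x ≤ y) (nTuple r s) b := by
  refine forall₂_of_length_eq_of_get (by rw [length_nTuple, hlen]) fun i hi hib => ?_
  simp only [get_eq_getElem, getElem_nTuple hi]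
  have h2 : 2 ≤ b[i] := hb2 _ (getElem_mem _)
  split_ifs with hthree hend hone
  · subst hthree; exact ⟨by norm_num, hmid⟩
  · subst hend; exact ⟨by positivity, hlast⟩
  · exact ⟨by norm_num, by omega⟩
  · exact ⟨by norm_num, h2⟩

theorem stmt10_general
    (b : List ℤ) (hne : b ≠ []) (hb2 : ∀ x ∈ b, 2 ≤ x)
    (hmid : ∀ (i : ℕ) (h : i < b.length), 1 ≤ i → i + 3 ≤ b.length → 3 ≤ b[i])
    (hlast : (b.length : ℤ) - 2 ≤ b.getLast hne)
    (r s : ℕ) (hrs : r + s + 4 = b.length) :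
    (1 :: (List.replicate r (2 : ℤ) ++ 3 ::
      (List.replicate s (2 : ℤ) ++ [1, (s : ℤ) + 2]))) ∈ Zset b := by
  obtain ⟨hadm, hzero⟩ := hjcf_nTuple r s
  have hlast' : (s : ℤ) + 2 ≤ b[r + s + 3] := by
    have hget : b.getLast hne = b[r + s + 3] := by
      rw [getLast_eq_getElem]; congr 1; omega
    have hlen : (b.length : ℤ) = r + s + 4 := by exact_mod_cast hrs.symm
    linarith
  have hthree : 3 ≤ b[r + 1] := hmid (r + 1) (by omega) (by omega) (by omega)
  exact ⟨hadm, hzero, nTuple_forall₂ hrs.symm hb2 hthree hlast'⟩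

/-- If `k ≥ 4`, `bᵢ ≥ 3` for `2 ≤ i ≤ k-2`, and `b_k ≥ k-2`, then for all `r,s ≥ 0`
with `r+s+4 = k` the tuple `n(r,s) = (1,2,…,2,3,2,…,2,1,s+2)` (with `r` twos after the
leading `1` and `s` twos after the `3`) belongs to `Z_{p,q}`. -/
theorem stmt10 (p q : ℤ) (hq : 1 ≤ q) (hpq : q < p) (hcop : IsCoprime p q)
    (b : List ℤ) (hne : b ≠ []) (hb2 : ∀ x ∈ b, 2 ≤ x)
    (hb : hjcf b = (p : ℚ) / ((p : ℚ) - (q : ℚ)))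
    (hk : 4 ≤ b.length)
    (hmid : ∀ (i : ℕ) (h : i < b.length), 1 ≤ i → i + 3 ≤ b.length → 3 ≤ b[i])
    (hlast : (b.length : ℤ) - 2 ≤ b.getLast hne)
    (r s : ℕ) (hrs : r + s + 4 = b.length) :
    (1 :: (List.replicate r (2 : ℤ) ++ 3 ::
      (List.replicate s (2 : ℤ) ++ [1, (s : ℤ) + 2]))) ∈ Zset b :=
  stmt10_general b hne hb2 hmid hlast r s hrs
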